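/- Let (ρ^AI, ρ^H) be a pair of stochastic choice functions satisfying: (Positivity) ρ(x,S) > 0 for all x ∈ S and ρ ∈ {ρ^AI, ρ^H}; (H-IIA) ρ^H satisfies IIA; (Proportionality) Δ_{xy}(S,T|ρ^AI)·Φ_{zt}(S',T'|ρ^AI,ρ^H) = Δ_{zt}(S',T'|ρ^AI)·Φ_{xy}(S,T|ρ^AI,ρ^H) for all tuples (x,y,S,T) and (z,t,S',T') with x,y ∈ S∩T and z,t ∈ S'∩T'; (Bounded Instability) Δ_{xy}(S,T|ρ^AI)·Φ_{xy}(S,T|ρ^AI,ρ^H) ≥ 0 and |Δ_{xy}(S,T|ρ^AI)| ≤ |Φ_{xy}(S,T|ρ^AI,ρ^H)| for all such tuples, both strictly if Δ_{xy}(S,T|ρ^AI) ≠ 0; (Bounded Divergence) ρ^AI(z,U)·|Φ_{xy}(S,T|ρ^AI,ρ^H)| ≥ ρ^H(z,U)·|Δ_{xy}(S,T|ρ^AI)| for all such tuples, all nonempty U ⊆ X and z ∈ U, strictly if Δ_{xy}(S,T|ρ^AI) ≠ 0. Then there exist u, v : X → ℝ_{>0} and α ∈ [0,1] such that (ρ^AI,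 ρ^H) is consistent with the Luce Alignment Model with parameters (u, v, α). -/

import Mathlib

open Finset

/-- A stochastic choice function: values in `[0,1]`, positive only on the menu,
and summing to one over each nonempty menu. -/
def IsSCF {X : Type*} (ρ : X → Finset X → ℝ) : Prop :=
  ∀ S : Finset X, S.Nonempty →
    (∀ x, 0 ≤ ρ x S ∧ ρ x S ≤ 1) ∧ (∀ x, 0 < ρ x S → x ∈ S) ∧ (∑ x ∈ S, ρ x S) = 1

/-- Independence of Irrelevant Alternatives. -/
def IIA {X : Type*} [DecidableEq X] (ρ : X → Finset X → ℝ) : Prop :=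
  ∀ S T : Finset X, S.Nonempty → T.Nonempty →
    ∀ x ∈ S ∩ T, ∀ y ∈ S ∩ T, ρ x S * ρ y T = ρ x T * ρ y S

/-- Own instability `Δ_{xy}(S,T|ρ)`. -/
noncomputable def Delta {X : Type*} (ρ : X → Finset X → ℝ) (x y : X) (S T : Finset X) : ℝ :=
  ρ x S * ρ y T - ρ y S * ρ x T

/-- Cross instability `Γ_{xy}(S,T|ρ,ρ')`. -/
noncomputable def Gamma {X : Type*} (ρ ρ' : X → Finset X → ℝ) (x y : X) (S T : Finset X) : ℝ :=
  ρ x S * ρ' y T - ρ y S * ρ' x T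

/-- Composite instability `Φ_{xy}(S,T|ρ,ρ')`. -/
noncomputable def Phi {X : Type*} (ρ ρ' : X → Finset X → ℝ) (x y : X) (S T : Finset X) : ℝ :=
  Gamma ρ ρ' x y S T + Gamma ρ' ρ x y S T

/-- The Luce rule with utility `u`. -/
noncomputable def LuceRule {X : Type*} (u : X → ℝ) (x : X) (S : Finset X) : ℝ :=
  u x / ∑ y ∈ S, u y

/-- `ρAI` is consistent with the Luce Alignment Model with parameters `(u, v, α)`. -/
def LAM1 {X : Type*} (ρAI : X → Finset X → ℝ) (u v : X → ℝ) (α : ℝ) : Prop :=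
  (∀ x, 0 < u x) ∧ (∀ x, 0 < v x) ∧ 0 ≤ α ∧ α ≤ 1 ∧
    ∀ S : Finset X, S.Nonempty → ∀ x ∈ S,
      ρAI x S = α * (u x / ∑ y ∈ S, u y) + (1 - α) * (v x / ∑ y ∈ S, v y)

/-- The pair `(ρAI, ρH)` is consistent with the Luce Alignment Model
with parameters `(u, v, α)`. -/
def LAMpair {X : Type*} (ρAI ρH : X → Finset X → ℝ) (u v : X → ℝ) (α : ℝ) : Prop :=
  LAM1 ρAI u v α ∧
    ∀ S : Finset X, S.Nonempty → ∀ x ∈ S, ρH x S = u x / ∑ y ∈ S, u y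

/-!
Write `d = Δ_{xy}(S,T|ρ^AI)` and `p = Φ_{xy}(S,T|ρ^AI,ρ^H)`. Proportionality makes the ratio
`d / p` a single constant `λ` wherever `d ≠ 0`, Bounded Instability puts it in `(0,1)` and Bounded
Divergence gives `λ ρ^H < ρ^AI`; if `d` vanishes everywhere, take `λ = 0`. The residual
`τ = (ρ^AI - λ ρ^H) / (1 - λ)` is then a positive stochastic choice function, and expanding
`Δ(τ)` shows it is `(d - λ p + λ² Δ(ρ^H)) / (1 - λ)² = 0`, so `τ` satisfies IIA. Both `ρ^H` and `τ`
are therefore Luce rules, with utilities read off the grand menu, and `ρ^AI = λ ρ^H + (1 - λ) τ`.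
-/

section

variable {X : Type*}

theorem iia_iff_delta_eq_zero [DecidableEq X] {ρ : X → Finset X → ℝ} :
    IIA ρ ↔ ∀ (x y : X) (S T : Finset X), x ∈ S ∩ T → y ∈ S ∩ T → Delta ρ x y S T = 0 := by
  refine ⟨fun h x y S T hx hy => ?_, fun h S T _ _ x hx y hy => ?_⟩
  · have := h S T ⟨x, (mem_inter.1 hx).1⟩ ⟨x, (mem_inter.1 hx).2⟩ x hx y hy
    rw [Delta]
    linarith
  · have := h x y S T hx hy
    rw [Delta] at this
    linarith

theorem eq_div_sum_of_iia [Fintype X] [DecidableEq X] {ρ : X → Finset X → ℝ}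
    (hpos : ∀ x, 0 < ρ x univ) (hsum : ∀ S : Finset X, S.Nonempty → ∑ x ∈ S, ρ x S = 1)
    (h : IIA ρ) {S : Finset X} {x : X} (hx : x ∈ S) :
    ρ x S = ρ x univ / ∑ y ∈ S, ρ y univ := by
  have hS : S.Nonempty := ⟨x, hx⟩
  rw [eq_div_iff (sum_pos (fun y _ => hpos y) hS).ne', mul_sum]
  calc ∑ y ∈ S, ρ x S * ρ y univ = ∑ y ∈ S, ρ x univ * ρ y S :=
        sum_congr rfl fun y hy =>
          h S univ hS ⟨x, mem_univ x⟩ x (mem_inter.2 ⟨hx, mem_univ x⟩) y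
            (mem_inter.2 ⟨hy, mem_univ y⟩)
    _ = ρ x univ := by rw [← mul_sum, hsum S hS, mul_one]

/-- The component `τ` in `ρ = l ρ' + (1 - l) τ`. -/
noncomputable def residualChoice (ρ ρ' : X → Finset X → ℝ) (l : ℝ) (z : X) (U : Finset X) : ℝ :=
  (ρ z U - l * ρ' z U) / (1 - l)

theorem eq_mix_residualChoice (ρ ρ' : X → Finset X → ℝ) {l : ℝ} (hl : l ≠ 1) (x : X)
    (S : Finset X) : ρ x S = l * ρ' x S + (1 - l) * residualChoice ρ ρ' l x S := by
  rw [residualChoice, mul_div_cancel₀ _ (sub_ne_zero.2 hl.symm)]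
  ring

theorem sum_residualChoice {ρ ρ' : X → Finset X → ℝ} {l : ℝ} (hl : l ≠ 1) {S : Finset X}
    (hρ : ∑ x ∈ S, ρ x S = 1) (hρ' : ∑ x ∈ S, ρ' x S = 1) :
    ∑ x ∈ S, residualChoice ρ ρ' l x S = 1 := by
  simp only [residualChoice]
  rw [← sum_div, sum_sub_distrib, ← mul_sum, hρ, hρ', mul_one, div_self (sub_ne_zero.2 hl.symm)]

theorem delta_residualChoice (ρ ρ' : X → Finset X → ℝ) (l : ℝ) (x y : X) (S T : Finset X) :
    Delta (residualChoice ρ ρ' l) x y S T =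
      (Delta ρ x y S T - l * Phi ρ ρ' x y S T + l ^ 2 * Delta ρ' x y S T) / (1 - l) ^ 2 := by
  rw [div_eq_mul_inv, ← inv_pow]
  simp only [Delta, Phi, Gamma, residualChoice, div_eq_mul_inv]
  ring

theorem exists_mixing_weight [DecidableEq X] {ρAI ρH : X → Finset X → ℝ}
    (hpos : ∀ U : Finset X, U.Nonempty → ∀ z ∈ U, 0 < ρAI z U)
    (hprop : ∀ (x y z t : X) (S T S' T' : Finset X),
      x ∈ S ∩ T → y ∈ S ∩ T → z ∈ S' ∩ T' → t ∈ S' ∩ T' →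
        Delta ρAI x y S T * Phi ρAI ρH z t S' T' = Delta ρAI z t S' T' * Phi ρAI ρH x y S T)
    (hbi : ∀ (x y : X) (S T : Finset X), x ∈ S ∩ T → y ∈ S ∩ T → Delta ρAI x y S T ≠ 0 →
      0 < Delta ρAI x y S T * Phi ρAI ρH x y S T ∧ |Delta ρAI x y S T| < |Phi ρAI ρH x y S T|)
    (hbd : ∀ (x y : X) (S T : Finset X), x ∈ S ∩ T → y ∈ S ∩ T →
      ∀ U : Finset X, U.Nonempty → ∀ z ∈ U, Delta ρAI x y S T ≠ 0 →
        ρH z U * |Delta ρAI x y S T| < ρAI z U * |Phi ρAI ρH x y S T|) :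
    ∃ l : ℝ, 0 ≤ l ∧ l < 1 ∧
      (∀ (x y : X) (S T : Finset X), x ∈ S ∩ T → y ∈ S ∩ T →
        Delta ρAI x y S T = l * Phi ρAI ρH x y S T) ∧
      ∀ U : Finset X, U.Nonempty → ∀ z ∈ U, l * ρH z U < ρAI z U := by
  by_cases hdeg : ∀ (x y : X) (S T : Finset X), x ∈ S ∩ T → y ∈ S ∩ T → Delta ρAI x y S T = 0
  · exact ⟨0, le_rfl, one_pos, fun x y S T hx hy => by rw [hdeg x y S T hx hy, zero_mul],
      fun U hU z hz => by rw [zero_mul]; exact hpos U hU z hz⟩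
  push Not at hdeg
  obtain ⟨x₀, y₀, S₀, T₀, hx₀, hy₀, hd⟩ := hdeg
  set d := Delta ρAI x₀ y₀ S₀ T₀
  set p := Phi ρAI ρH x₀ y₀ S₀ T₀
  obtain ⟨hdp, hlt⟩ := hbi x₀ y₀ S₀ T₀ hx₀ hy₀ hd
  have hp : p ≠ 0 := right_ne_zero_of_mul hdp.ne'
  have habs_p : 0 < |p| := abs_pos.2 hp
  have hratio : 0 < d / p := div_pos_iff.2 (mul_pos_iff.1 hdp)
  have habs_d : |d| = d / p * |p| := by
    rw [← abs_of_pos hratio, ← abs_mul, div_mul_cancel₀ _ hp]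
  refine ⟨d / p, hratio.le, ?_, fun x y S T hx hy => ?_, fun U hU z hz => ?_⟩
  · rw [habs_d] at hlt
    exact (mul_lt_iff_lt_one_left habs_p).1 hlt
  · rw [div_mul_eq_mul_div, eq_div_iff hp, hprop x y x₀ y₀ S T S₀ T₀ hx hy hx₀ hy₀]
  · have h := hbd x₀ y₀ S₀ T₀ hx₀ hy₀ U hU z hz hd
    rw [habs_d, ← mul_assoc, mul_comm (ρH z U)] at h
    exact lt_of_mul_lt_mul_right h habs_p.le

end

theorem lam_characterization_general {X : Type*} [Fintype X] [DecidableEq X]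
    (ρAI ρH : X → Finset X → ℝ) (hAI : IsSCF ρAI) (hH : IsSCF ρH)
    (hpos : ∀ S : Finset X, S.Nonempty → ∀ x ∈ S, 0 < ρAI x S ∧ 0 < ρH x S)
    (hIIA : IIA ρH)
    (hprop : ∀ (x y z t : X) (S T S' T' : Finset X),
      x ∈ S ∩ T → y ∈ S ∩ T → z ∈ S' ∩ T' → t ∈ S' ∩ T' →
        Delta ρAI x y S T * Phi ρAI ρH z t S' T'
          = Delta ρAI z t S' T' * Phi ρAI ρH x y S T)
    (hbi : ∀ (x y : X) (S T : Finset X), x ∈ S ∩ T → y ∈ S ∩ T →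
      0 ≤ Delta ρAI x y S T * Phi ρAI ρH x y S T ∧
      |Delta ρAI x y S T| ≤ |Phi ρAI ρH x y S T| ∧
      (Delta ρAI x y S T ≠ 0 →
        0 < Delta ρAI x y S T * Phi ρAI ρH x y S T ∧
        |Delta ρAI x y S T| < |Phi ρAI ρH x y S T|))
    (hbd : ∀ (x y : X) (S T : Finset X), x ∈ S ∩ T → y ∈ S ∩ T →
      ∀ U : Finset X, U.Nonempty → ∀ z ∈ U,
        ρH z U * |Delta ρAI x y S T| ≤ ρAI z U * |Phi ρAI ρH x y S T| ∧
        (Delta ρAI x y S T ≠ 0 →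
          ρH z U * |Delta ρAI x y S T| < ρAI z U * |Phi ρAI ρH x y S T|)) :
    ∃ (u v : X → ℝ) (α : ℝ), LAMpair ρAI ρH u v α := by
  obtain ⟨l, hl₀, hl₁, hΔ, hdom⟩ := exists_mixing_weight (fun U hU z hz => (hpos U hU z hz).1)
    hprop (fun x y S T hx hy => (hbi x y S T hx hy).2.2)
    (fun x y S T hx hy U hU z hz => (hbd x y S T hx hy U hU z hz).2)
  set τ := residualChoice ρAI ρH l
  have hτpos : ∀ S : Finset X, S.Nonempty → ∀ x ∈ S, 0 < τ x S := fun S hS x hx =>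
    div_pos (sub_pos.2 (hdom S hS x hx)) (sub_pos.2 hl₁)
  have hτsum : ∀ S : Finset X, S.Nonempty → ∑ x ∈ S, τ x S = 1 := fun S hS =>
    sum_residualChoice hl₁.ne (hAI S hS).2.2 (hH S hS).2.2
  have hτ : IIA τ := iia_iff_delta_eq_zero.2 fun x y S T hx hy => by
    rw [delta_residualChoice, hΔ x y S T hx hy, iia_iff_delta_eq_zero.1 hIIA x y S T hx hy]
    ring
  have huniv (x : X) : 0 < ρH x univ ∧ 0 < τ x univ :=
    ⟨(hpos univ ⟨x, mem_univ x⟩ x (mem_univ x)).2, hτpos univ ⟨x, mem_univ x⟩ x (mem_univ x)⟩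
  have hHluce {S : Finset X} {x : X} (hx : x ∈ S) :=
    eq_div_sum_of_iia (fun y => (huniv y).1) (fun S hS => (hH S hS).2.2) hIIA hx
  refine ⟨fun x => ρH x univ, fun x => τ x univ, l,
    ⟨fun x => (huniv x).1, fun x => (huniv x).2, hl₀, hl₁.le, fun S _ x hx => ?_⟩,
    fun S _ x hx => hHluce hx⟩
  have hmix : ρAI x S = l * ρH x S + (1 - l) * τ x S := eq_mix_residualChoice ρAI ρH hl₁.ne x S
  rw [hmix, hHluce hx, eq_div_sum_of_iia (fun y => (huniv y).2) hτsum hτ hx]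

theorem lam_characterization {X : Type*} [Fintype X] [DecidableEq X]
    (hcard : 3 ≤ Fintype.card X)
    (ρAI ρH : X → Finset X → ℝ) (hAI : IsSCF ρAI) (hH : IsSCF ρH)
    (hpos : ∀ S : Finset X, S.Nonempty → ∀ x ∈ S, 0 < ρAI x S ∧ 0 < ρH x S)
    (hIIA : IIA ρH)
    (hprop : ∀ (x y z t : X) (S T S' T' : Finset X),
      x ∈ S ∩ T → y ∈ S ∩ T → z ∈ S' ∩ T' → t ∈ S' ∩ T' →
        Delta ρAI x y S T * Phi ρAI ρH z t S' T'
          = Delta ρAI z t S' T' * Phi ρAI ρH x y S T)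
    (hbi : ∀ (x y : X) (S T : Finset X), x ∈ S ∩ T → y ∈ S ∩ T →
      0 ≤ Delta ρAI x y S T * Phi ρAI ρH x y S T ∧
      |Delta ρAI x y S T| ≤ |Phi ρAI ρH x y S T| ∧
      (Delta ρAI x y S T ≠ 0 →
        0 < Delta ρAI x y S T * Phi ρAI ρH x y S T ∧
        |Delta ρAI x y S T| < |Phi ρAI ρH x y S T|))
    (hbd : ∀ (x y : X) (S T : Finset X), x ∈ S ∩ T → y ∈ S ∩ T →
      ∀ U : Finset X, U.Nonempty → ∀ z ∈ U,
        ρH z U * |Delta ρAI x y S T| ≤ ρAI z U * |Phi ρAI ρH x y S T| ∧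
        (Delta ρAI x y S T ≠ 0 →
          ρH z U * |Delta ρAI x y S T| < ρAI z U * |Phi ρAI ρH x y S T|)) :
    ∃ (u v : X → ℝ) (α : ℝ), LAMpair ρAI ρH u v α :=
  lam_characterization_general ρAI ρH hAI hH hpos hIIA hprop hbi hbd
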